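/- arXiv:1805.00647 — 3 statements merged into one kernel-verified Lean document; each statement's English description precedes it below -/
import Mathlib

section
/- The group G = ⟨a, b | a^q = b^{p²} = 1, bab^{-1} = a^i⟩ where p < q are primes and i has multiplicative order p modulo q, has exactly q + 4 cyclic subgroups. -/
noncomputable def numCyclic (G : Type*) [Group G] : ℕ := Nat.card {H : Subgroup G // IsCyclic H}

/-!
`A = ⟨a⟩` is normal of order `q`, `G ⧸ A` is cyclic of order `p²` generated by the image of `b`,
and `b ^ p` centralises `a` because `i ^ p ≡ 1 (mod q)`. Hence an element of `G` either has order
divisible by `p²` or lies in `C = ⟨a * b ^ p⟩ = A ⊔ ⟨b ^ p⟩`, cyclic of order `q * p`. The cyclic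
subgroups of `G` are therefore the subgroups of `C`, one for each of the four divisors of `q * p`,
and the cyclic subgroups of order `p²`, which (since `G` is not abelian, hence not cyclic) are
exactly the Sylow `p`-subgroups. Their number divides `q` and is not `1`, because a normal `⟨b⟩`
would make `a` and `b` commute; so there are `q` of them.
-/

open Subgroup

section

variable {G : Type*} [Group G]

theorem conj_pow_eq_pow_pow {a b : G} {i : ℕ} (hrel : b * a * b⁻¹ = a ^ i) (n : ℕ) :
    b ^ n * a * (b ^ n)⁻¹ = a ^ i ^ n := by
  induction n with
  | zero => simp
  | succ n ih =>
    rw [pow_succ', mul_inv_rev, show b * b ^ n * a * ((b ^ n)⁻¹ * b⁻¹) =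
      b * (b ^ n * a * (b ^ n)⁻¹) * b⁻¹ by group, ih, ← conj_pow, hrel, ← pow_mul, pow_succ']

theorem Commute.mem_zpowers_mul_left {x y : G} (h : Commute x y)
    (hco : (orderOf x).Coprime (orderOf y)) : x ∈ zpowers (x * y) := by
  obtain ⟨m, hm⟩ := exists_pow_eq_self_of_coprime hco.symm
  have hx : (x * y) ^ (orderOf y * m) = x := by
    rw [pow_mul, h.mul_pow, pow_orderOf_eq_one, mul_one, hm]
  simpa only [hx] using npow_mem_zpowers (x * y) (orderOf y * m)

theorem Commute.zpowers_mul_eq_sup {x y : G} (h : Commute x y)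
    (hco : (orderOf x).Coprime (orderOf y)) : zpowers (x * y) = zpowers x ⊔ zpowers y := by
  refine le_antisymm (zpowers_le.mpr (mul_mem_sup (mem_zpowers x) (mem_zpowers y)))
    (sup_le (zpowers_le.mpr (h.mem_zpowers_mul_left hco)) (zpowers_le.mpr ?_))
  exact h.eq ▸ h.symm.mem_zpowers_mul_left hco.symm

theorem orderOf_pow_eq_of_orderOf_eq_sq {b : G} {p : ℕ} (hp : 0 < p) (hb : orderOf b = p ^ 2) :
    orderOf (b ^ p) = p := by
  rw [orderOf_pow_of_dvd hp.ne' (hb ▸ dvd_pow_self p two_ne_zero), hb, sq,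
    Nat.mul_div_cancel _ hp]

theorem not_isCyclic_of_not_commute {a b : G} (h : ¬Commute a b) : ¬IsCyclic G :=
  fun _ => h (IsMulCommutative.is_comm.comm a b)

theorem Subgroup.eq_zpowers_pow_of_le_zpowers [Finite G] {g : G} {H : Subgroup G}
    (hH : H ≤ zpowers g) : H = zpowers (g ^ (orderOf g / Nat.card H)) := by
  have hdvd : Nat.card H ∣ orderOf g := Nat.card_zpowers g ▸ card_dvd_of_le hH
  have hcard : orderOf (g ^ (orderOf g / Nat.card H)) = Nat.card H :=
    orderOf_pow_orderOf_div (orderOf_pos g).ne' hdvd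
  refine eq_of_le_of_card_ge (fun x hx => ?_) (by rw [Nat.card_zpowers, hcard])
  obtain ⟨k, rfl⟩ := (Submonoid.mem_powers_iff _ _).mp (mem_powers_iff_mem_zpowers.mpr (hH hx))
  have hk : orderOf g ∣ k * Nat.card H := by
    rw [orderOf_dvd_iff_pow_eq_one, pow_mul, ← orderOf_dvd_iff_pow_eq_one]
    exact Nat.card_zpowers (g ^ k) ▸ card_dvd_of_le (zpowers_le.mpr hx)
  obtain ⟨j, rfl⟩ : orderOf g / Nat.card H ∣ k := by
    rw [← Nat.div_mul_cancel hdvd] at hk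
    exact Nat.dvd_of_mul_dvd_mul_right Nat.card_pos hk
  rw [pow_mul]
  exact npow_mem_zpowers _ _

theorem Subgroup.card_le_zpowers_eq_card_divisors [Finite G] (g : G) :
    Nat.card {H : Subgroup G // H ≤ zpowers g} = (orderOf g).divisors.card := by
  rw [← Nat.card_eq_finsetCard]
  refine Nat.card_congr (Equiv.ofBijective (fun H => ⟨Nat.card H.1, ?_⟩) ⟨?_, ?_⟩)
  · exact Nat.mem_divisors.mpr ⟨Nat.card_zpowers g ▸ card_dvd_of_le H.2, (orderOf_pos g).ne'⟩
  · intro H K hHK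
    have hHK : Nat.card H.1 = Nat.card K.1 := congrArg Subtype.val hHK
    exact Subtype.ext ((eq_zpowers_pow_of_le_zpowers H.2).trans
      (hHK ▸ (eq_zpowers_pow_of_le_zpowers K.2).symm))
  · rintro ⟨d, hd⟩
    have hd := (Nat.mem_divisors.mp hd).1
    refine ⟨⟨zpowers (g ^ (orderOf g / d)), zpowers_le.mpr (npow_mem_zpowers _ _)⟩, ?_⟩
    exact Subtype.ext (by
      simp only [Nat.card_zpowers, orderOf_pow_orderOf_div (orderOf_pos g).ne' hd])

theorem Sylow.card_eq_card_subgroup_card_eq [Finite G] (p : ℕ) [Fact p.Prime] :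
    Nat.card (Sylow p G) =
      Nat.card {H : Subgroup G // Nat.card H = p ^ (Nat.card G).factorization p} :=
  Nat.card_congr
    { toFun := fun P => ⟨P, P.card_eq_multiplicity⟩
      invFun := fun H => Sylow.ofCard H.1 H.2
      left_inv := fun _ => rfl
      right_inv := fun _ => rfl }

theorem Nat.factorization_mul_pow_self_of_not_dvd {p q : ℕ} (hp : p.Prime) (hq : q ≠ 0)
    (hpq : ¬p ∣ q) (k : ℕ) : (q * p ^ k).factorization p = k := by
  rw [Nat.factorization_mul hq (pow_ne_zero k hp.ne_zero), Finsupp.add_apply,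
    hp.factorization_pow, Finsupp.single_eq_same, Nat.factorization_eq_zero_of_not_dvd hpq,
    zero_add]

theorem Subgroup.normal_zpowers_of_closure_pair_eq_top [Finite G] {a b : G}
    (hgen : closure {a, b} = ⊤) (hconj : b * a * b⁻¹ ∈ zpowers a) : (zpowers a).Normal := by
  have hb : (zpowers a).map (MulAut.conj b).toMonoidHom = zpowers a := by
    rw [MonoidHom.map_zpowers]
    refine eq_of_le_of_card_ge (zpowers_le.mpr hconj) ?_
    rw [Nat.card_zpowers, Nat.card_zpowers]
    exact (orderOf_injective _ (MulAut.conj b).injective a).ge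
  rw [← normalizer_eq_top_iff, eq_top_iff, ← hgen, closure_le]
  rintro x (rfl | rfl)
  · exact le_normalizer (mem_zpowers x)
  · exact mem_normalizer_iff_map_conj_eq.mpr hb

theorem QuotientGroup.zpowers_mk_eq_top {A : Subgroup G} [A.Normal] {a b : G}
    (hgen : closure {a, b} = ⊤) (ha : a ∈ A) : zpowers (b : G ⧸ A) = ⊤ := by
  rw [eq_top_iff, ← map_top_of_surjective _ (QuotientGroup.mk'_surjective A), ← hgen,
    MonoidHom.map_closure, closure_le]
  rintro _ ⟨x, rfl | rfl, rfl⟩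
  · simp [(QuotientGroup.eq_one_iff x).mpr ha]
  · exact mem_zpowers _

theorem orderOf_eq_and_orderOf_mk_eq [Finite G] {a b : G} [(zpowers a).Normal]
    (htop : zpowers (b : G ⧸ zpowers a) = ⊤) {m n : ℕ} (ha : orderOf a ∣ m) (hb : orderOf b ∣ n)
    (hcard : Nat.card G = m * n) :
    orderOf a = m ∧ orderOf b = n ∧ orderOf (b : G ⧸ zpowers a) = n := by
  have hbb : orderOf (b : G ⧸ zpowers a) ∣ orderOf b :=
    orderOf_map_dvd (QuotientGroup.mk' (zpowers a)) b
  have hprod : orderOf a * orderOf (b : G ⧸ zpowers a) = m * n := by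
    rw [← hcard, card_eq_card_quotient_mul_card_subgroup (zpowers a), Nat.card_zpowers,
      orderOf_eq_card_of_zpowers_eq_top htop, mul_comm]
  have hmn : 0 < m * n := hcard ▸ Nat.card_pos
  have ha_le := Nat.le_of_dvd (Nat.pos_of_mul_pos_right hmn) ha
  have hb_le := Nat.le_of_dvd (Nat.pos_of_mul_pos_left hmn) (hbb.trans hb)
  have hbn : orderOf (b : G ⧸ zpowers a) = n := by
    nlinarith [orderOf_pos a, orderOf_pos (b : G ⧸ zpowers a)]
  refine ⟨Nat.eq_of_mul_eq_mul_right (Nat.pos_of_mul_pos_left hmn) (hbn ▸ hprod),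
    Nat.dvd_antisymm hb (hbn ▸ hbb), hbn⟩

theorem pow_dvd_orderOf_or_mem_sup_zpowers [Finite G] {A : Subgroup G} [A.Normal] {b : G}
    (htop : zpowers (b : G ⧸ A) = ⊤) {p n : ℕ} (hp : p.Prime)
    (hb : orderOf (b : G ⧸ A) = p ^ n) (g : G) :
    p ^ n ∣ orderOf g ∨ g ∈ A ⊔ zpowers (b ^ p) := by
  obtain ⟨m, hm⟩ := (Submonoid.mem_powers_iff _ _).mp
    (mem_powers_iff_mem_zpowers.mpr (htop ▸ mem_top (g : G ⧸ A)))
  have hgA : g * (b ^ m)⁻¹ ∈ A := by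
    rw [← QuotientGroup.eq_one_iff]
    simp [← hm]
  by_cases hpm : p ∣ m
  · obtain ⟨k, rfl⟩ := hpm
    right
    rw [← inv_mul_cancel_right g (b ^ (p * k))]
    rw [pow_mul] at hgA ⊢
    exact mul_mem (mem_sup_left hgA) (mem_sup_right (npow_mem_zpowers _ _))
  · left
    have hco : (orderOf (b : G ⧸ A)).Coprime m :=
      hb ▸ (hp.coprime_iff_not_dvd.mpr hpm).pow_left n
    rw [← hb, ← hco.orderOf_pow, hm]
    exact orderOf_map_dvd (QuotientGroup.mk' A) g

theorem not_commute_of_orderOf_natCast_ne_one {a b : G} {i : ℕ}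
    (hi : orderOf (i : ZMod (orderOf a)) ≠ 1) (hrel : b * a * b⁻¹ = a ^ i) : ¬Commute a b := by
  intro h
  have hai : a ^ i = a ^ 1 := by rw [← hrel, ← h.eq, mul_inv_cancel_right, pow_one]
  rw [pow_eq_pow_iff_modEq, ← ZMod.natCast_eq_natCast_iff, Nat.cast_one] at hai
  exact hi (hai ▸ orderOf_one)

theorem commute_pow_orderOf_natCast {a b : G} {i : ℕ} (hrel : b * a * b⁻¹ = a ^ i) :
    Commute a (b ^ orderOf (i : ZMod (orderOf a))) := by
  have hai : a ^ i ^ orderOf (i : ZMod (orderOf a)) = a ^ 1 := by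
    rw [pow_eq_pow_iff_modEq, ← ZMod.natCast_eq_natCast_iff]
    push_cast
    exact pow_orderOf_eq_one _
  rw [pow_one] at hai
  exact (mul_inv_eq_iff_eq_mul.mp ((conj_pow_eq_pow_pow hrel _).trans hai)).symm

theorem Sylow.card_eq_of_not_commute [Finite G] {a b : G} {p q : ℕ} [hp : Fact p.Prime]
    (hq : q.Prime) (hpq : p ≠ q) [(zpowers a).Normal] (hoa : orderOf a = q)
    (hob : orderOf b = p ^ 2) (hcard : Nat.card G = q * p ^ 2) (hab : ¬Commute a b) :
    Nat.card (Sylow p G) = q := by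
  have hfac : (Nat.card G).factorization p = 2 := hcard ▸
    Nat.factorization_mul_pow_self_of_not_dvd hp.out hq.ne_zero
      ((Nat.prime_dvd_prime_iff_eq hp.out hq).not.mpr hpq) 2
  let P : Sylow p G := Sylow.ofCard (zpowers b) (by rw [Nat.card_zpowers, hob, hfac])
  have hindex : (P : Subgroup G).index = q := by
    have := card_mul_index (P : Subgroup G)
    rw [Sylow.coe_ofCard, Nat.card_zpowers, hob, hcard, mul_comm] at this
    exact Nat.eq_of_mul_eq_mul_right (by positivity [hp.out.pos]) this
  refine (hq.eq_one_or_self_of_dvd _ (hindex ▸ P.card_dvd_index)).resolve_left fun h1 => hab ?_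
  have : Subsingleton (Sylow p G) := (Nat.card_eq_one_iff_unique.mp h1).1
  have hdis : Disjoint (zpowers a) (zpowers b) := by
    refine disjoint_of_coprime_natCard ?_
    rw [Nat.card_zpowers, Nat.card_zpowers, hoa, hob]
    exact ((Nat.coprime_primes hq hp.out).mpr hpq.symm).pow_right 2
  exact commute_of_normal_of_disjoint _ _ inferInstance P.normal_of_subsingleton hdis a b
    (mem_zpowers a) (mem_zpowers b)

theorem isCyclic_and_dvd_card_iff [Finite G] {c : G} {q n : ℕ} (hq : q.Prime)
    (hcard : Nat.card G = q * n) (hG : ¬IsCyclic G) (hC : ∀ g, n ∣ orderOf g ∨ g ∈ zpowers c)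
    (hCn : ¬n ∣ orderOf c) (H : Subgroup G) : IsCyclic H ∧ n ∣ Nat.card H ↔ Nat.card H = n := by
  constructor
  · rintro ⟨hH, hn⟩
    obtain ⟨g, rfl⟩ := H.isCyclic_iff_exists_zpowers_eq_top.mp hH
    rw [Nat.card_zpowers] at hn ⊢
    obtain ⟨d, hd⟩ := hn
    have hn0 : 0 < n := Nat.pos_of_mul_pos_left (hcard ▸ Nat.card_pos)
    have hdq : d ∣ q := by
      have := hcard ▸ orderOf_dvd_natCard g
      rw [hd, mul_comm q] at this
      exact Nat.dvd_of_mul_dvd_mul_left hn0 this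
    rcases hq.eq_one_or_self_of_dvd d hdq with rfl | rfl
    · rw [hd, mul_one]
    · refine absurd ?_ hG
      rw [← (topEquiv (G := G)).isCyclic, ← eq_top_of_card_eq (zpowers g)
        (by rw [Nat.card_zpowers, hd, hcard, mul_comm])]
      infer_instance
  · intro hH
    obtain ⟨g, hgH, hgC⟩ : ∃ g ∈ H, g ∉ zpowers c := by
      by_contra! hle
      exact hCn (Nat.card_zpowers c ▸ hH ▸ card_dvd_of_le hle)
    have hg : orderOf g = Nat.card H :=
      Nat.dvd_antisymm (Nat.card_zpowers g ▸ card_dvd_of_le (zpowers_le.mpr hgH))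
        (hH ▸ (hC g).resolve_right hgC)
    have hzg : zpowers g = H :=
      eq_of_le_of_card_ge (zpowers_le.mpr hgH) (by rw [Nat.card_zpowers, hg])
    exact ⟨hzg ▸ inferInstance, hH.symm.dvd⟩

theorem isCyclic_and_not_dvd_card_iff {c : G} {n : ℕ} (hC : ∀ g, n ∣ orderOf g ∨ g ∈ zpowers c)
    (hCn : ¬n ∣ orderOf c) (H : Subgroup G) :
    IsCyclic H ∧ ¬n ∣ Nat.card H ↔ H ≤ zpowers c := by
  constructor
  · rintro ⟨hH, hn⟩
    obtain ⟨g, rfl⟩ := H.isCyclic_iff_exists_zpowers_eq_top.mp hH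
    rw [Nat.card_zpowers] at hn
    exact zpowers_le.mpr ((hC g).resolve_left hn)
  · intro hH
    exact ⟨isCyclic_of_le hH, fun hn => hCn (hn.trans (Nat.card_zpowers c ▸ card_dvd_of_le hH))⟩

theorem numCyclic_eq_card_add_card [Finite G] {n : ℕ} {C : Subgroup G}
    (h₁ : ∀ H : Subgroup G, IsCyclic H ∧ n ∣ Nat.card H ↔ Nat.card H = n)
    (h₂ : ∀ H : Subgroup G, IsCyclic H ∧ ¬n ∣ Nat.card H ↔ H ≤ C) :
    numCyclic G =
      Nat.card {H : Subgroup G // Nat.card H = n} + Nat.card {H : Subgroup G // H ≤ C} := by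
  let P : {H : Subgroup G // IsCyclic H} → Prop := fun H => n ∣ Nat.card H.1
  rw [numCyclic, ← Nat.card_congr (Equiv.sumCompl P), Nat.card_sum,
    Nat.card_congr ((Equiv.subtypeSubtypeEquivSubtypeInter _ _).trans
      (Equiv.subtypeEquivRight h₁)),
    Nat.card_congr ((Equiv.subtypeSubtypeEquivSubtypeInter _ _).trans
      (Equiv.subtypeEquivRight h₂))]

end

/-- The group `⟨a, b | a^q = b^(p²) = 1, b a b⁻¹ = a^i⟩`, where `p < q` are primes and
`i` has multiplicative order `p` modulo `q`, has exactly `q + 4` cyclic subgroups. -/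
theorem stmt_7 (G : Type*) [Group G] [Finite G] (p q i : ℕ) (hp : p.Prime) (hq : q.Prime)
    (hpq : p < q) (hi : orderOf (i : ZMod q) = p)
    (a b : G) (ha : a ^ q = 1) (hb : b ^ (p ^ 2) = 1) (hrel : b * a * b⁻¹ = a ^ i)
    (hgen : Subgroup.closure {a, b} = ⊤) (hcard : Nat.card G = q * p ^ 2) :
    numCyclic G = q + 4 := by
  have : Fact p.Prime := ⟨hp⟩
  have hqp : q.Coprime p := (Nat.coprime_primes hq hp).mpr hpq.ne'
  have : (zpowers a).Normal :=
    normal_zpowers_of_closure_pair_eq_top hgen (hrel ▸ npow_mem_zpowers a i)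
  have htop := QuotientGroup.zpowers_mk_eq_top hgen (mem_zpowers a)
  obtain ⟨hoa, hob, hob'⟩ := orderOf_eq_and_orderOf_mk_eq htop (orderOf_dvd_of_pow_eq_one ha)
    (orderOf_dvd_of_pow_eq_one hb) hcard
  have hab : ¬Commute a b := not_commute_of_orderOf_natCast_ne_one (hoa ▸ hi ▸ hp.one_lt.ne') hrel
  have hcomm : Commute a (b ^ p) := hi ▸ hoa ▸ commute_pow_orderOf_natCast hrel
  have hobp : orderOf (b ^ p) = p := orderOf_pow_eq_of_orderOf_eq_sq hp.pos hob
  have hco : (orderOf a).Coprime (orderOf (b ^ p)) := by rwa [hoa, hobp]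
  have hC : ∀ g, p ^ 2 ∣ orderOf g ∨ g ∈ zpowers (a * b ^ p) := by
    rw [hcomm.zpowers_mul_eq_sup hco]
    exact pow_dvd_orderOf_or_mem_sup_zpowers htop hp hob'
  have hoc : orderOf (a * b ^ p) = q * p := by
    rw [hcomm.orderOf_mul_eq_mul_orderOf_of_coprime hco, hoa, hobp]
  have hCn : ¬p ^ 2 ∣ orderOf (a * b ^ p) := fun h => hp.coprime_iff_not_dvd.mp hqp.symm
    (Nat.dvd_of_mul_dvd_mul_right hp.pos (by rwa [hoc, sq] at h))
  rw [numCyclic_eq_card_add_card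
      (isCyclic_and_dvd_card_iff hq hcard (not_isCyclic_of_not_commute hab) hC hCn)
      (isCyclic_and_not_dvd_card_iff hC hCn),
    ← Nat.factorization_mul_pow_self_of_not_dvd hp hq.ne_zero
      (hp.coprime_iff_not_dvd.mp hqp.symm) 2, ← hcard, ← Sylow.card_eq_card_subgroup_card_eq,
    Sylow.card_eq_of_not_commute hq hpq.ne hoa hob hcard hab, card_le_zpowers_eq_card_divisors,
    hoc, hqp.card_divisors_mul, hq.divisors, hp.divisors, Finset.card_pair hq.one_lt.ne,
    Finset.card_pair hp.one_lt.ne]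
end

section
/- If G is a finite group of order p²q with p < q primes for which the converse of Lagrange's theorem fails (i.e., there exists a divisor d of |G| such that G has no subgroup of order d), then G ≅ A₄. -/
/-!
Every divisor of `p² q` other than `p q` is a prime power or `p² q` itself, so by Sylow the only
possible missing order is `p q`. A missing subgroup of order `p q` forces the Sylow `q`-subgroup
`Q` (of order `q`) to be non-normal, since otherwise `H Q` with `|H| = p` would have order `p q`.
Then `n_q ≠ 1`, `n_q ∣ p²` and `n_q ≡ 1 mod q` leave only `p = 2`, `q = 3`, `n_3 = 4`. In a
group of order 12 with four Sylow 3-subgroups these are self-normalizing, so the conjugation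
action on them is faithful and embeds `G` as a subgroup of index 2 in `S₄`, which must be `A₄`.
-/

open Subgroup Pointwise

namespace Subgroup

variable {G : Type*} [Group G] [Finite G]

theorem card_sup_of_normal_of_coprime {H K : Subgroup G} [K.Normal]
    (h : (Nat.card H).Coprime (Nat.card K)) :
    Nat.card ↥(H ⊔ K) = Nat.card H * Nat.card K := by
  have hle : Nat.card ↥(H ⊔ K) ≤ Nat.card H * Nat.card K := by
    calc Nat.card ↥(H ⊔ K) = Nat.card ((H : Set G) * (K : Set G)) := by
          rw [← mul_normal H K]; rfl
      _ ≤ Nat.card H * Nat.card K := Set.natCard_mul_le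
  have hdvd : Nat.card H * Nat.card K ∣ Nat.card ↥(H ⊔ K) :=
    h.mul_dvd_of_dvd_of_dvd (card_dvd_of_le le_sup_left) (card_dvd_of_le le_sup_right)
  exact hle.antisymm (Nat.le_of_dvd Nat.card_pos hdvd)

end Subgroup

theorem Nat.Prime.eq_two_of_prime_add_one {p : ℕ} (hp : p.Prime) (hp1 : (p + 1).Prime) :
    p = 2 := by
  rcases hp.eq_two_or_odd' with h | h
  · exact h
  · have := hp1.even_iff.mp h.add_one
    have := hp.two_le
    omega

theorem Nat.Prime.eq_two_three_four_of_dvd_sq_of_modEq_one {p q n : ℕ} (hp : p.Prime)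
    (hq : q.Prime) (hpq : p < q) (hn : n ∣ p ^ 2) (hmod : n ≡ 1 [MOD q]) (hn1 : n ≠ 1) :
    p = 2 ∧ q = 3 ∧ n = 4 := by
  obtain ⟨i, hi, rfl⟩ := (Nat.dvd_prime_pow hp).mp hn
  have hdvd : q ∣ p ^ i - 1 := (Nat.modEq_iff_dvd' (Nat.one_le_pow _ _ hp.pos)).mp hmod.symm
  interval_cases i
  · exact absurd (pow_zero p) hn1
  · rw [pow_one] at hdvd
    have := Nat.le_of_dvd (by have := hp.two_le; omega) hdvd
    omega
  · have hfac : p ^ 2 - 1 = (p + 1) * (p - 1) := by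
      rw [← Nat.sq_sub_sq, one_pow]
    rw [hfac] at hdvd
    rcases (Nat.Prime.dvd_mul hq).mp hdvd with h | h
    · have hqp : q = p + 1 := le_antisymm (Nat.le_of_dvd (by omega) h) hpq
      obtain rfl := hp.eq_two_of_prime_add_one (hqp ▸ hq)
      omega
    · have := Nat.le_of_dvd (by have := hp.two_le; omega) h
      omega

section OrderPSqQ

variable {G : Type*} [Group G] [Finite G]

theorem exists_subgroup_card_eq_of_dvd_of_ne {p q d : ℕ} (hp : p.Prime) (hq : q.Prime)
    (hcard : Nat.card G = p ^ 2 * q) (hd : d ∣ Nat.card G) (hne : d ≠ p * q) :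
    ∃ H : Subgroup G, Nat.card H = d := by
  have : Fact p.Prime := ⟨hp⟩
  have : Fact q.Prime := ⟨hq⟩
  rw [hcard] at hd
  obtain ⟨a, b, ha, hb, rfl⟩ := Nat.dvd_mul.mp hd
  obtain ⟨i, hi, rfl⟩ := (Nat.dvd_prime_pow hp).mp ha
  rcases (Nat.dvd_prime hq).mp hb with rfl | hbq
  · rw [mul_one]
    exact Sylow.exists_subgroup_card_pow_prime p
      (hcard ▸ (pow_dvd_pow p hi).mul_right q)
  · rw [hbq] at hne ⊢
    interval_cases i
    · obtain ⟨H, hH⟩ := Sylow.exists_subgroup_card_pow_prime (G := G) q (n := 1)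
        (by rw [hcard, pow_one]; exact dvd_mul_left q _)
      exact ⟨H, by rw [hH, pow_zero, one_mul, pow_one]⟩
    · exact absurd (by rw [pow_one]) hne
    · exact ⟨⊤, by rw [card_top, hcard]⟩

theorem Sylow.exists_card_eq_prime_of_card_eq {q m : ℕ} [Fact q.Prime]
    (hcard : Nat.card G = q * m) (hm : ¬ q ∣ m) :
    ∃ Q : Sylow q G, Nat.card Q = q ∧ (Q : Subgroup G).index = m := by
  obtain ⟨H, hH⟩ := Sylow.exists_subgroup_card_pow_prime (G := G) q (n := 1)
    (by rw [hcard, pow_one]; exact dvd_mul_right q m)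
  rw [pow_one] at hH
  have hindex : H.index = m := by
    have := H.card_mul_index
    rw [hH, hcard] at this
    exact Nat.eq_of_mul_eq_mul_left (Fact.out : q.Prime).pos this
  exact ⟨IsPGroup.toSylow (IsPGroup.of_card (n := 1) (by rw [hH, pow_one])) (hindex ▸ hm),
    hH, hindex⟩

theorem not_normal_of_forall_card_ne {p q : ℕ} (hp : p.Prime) (hpq : p.Coprime q)
    (hdvd : p ∣ Nat.card G) {Q : Subgroup G} (hQ : Nat.card Q = q)
    (hno : ∀ H : Subgroup G, Nat.card H ≠ p * q) : ¬ Q.Normal := by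
  intro hQn
  have : Fact p.Prime := ⟨hp⟩
  obtain ⟨H, hH⟩ := Sylow.exists_subgroup_card_pow_prime p (n := 1) (by rwa [pow_one])
  rw [pow_one] at hH
  apply hno (H ⊔ Q)
  rw [card_sup_of_normal_of_coprime (by rwa [hH, hQ]), hH, hQ]

end OrderPSqQ

namespace Sylow

variable {G : Type*} [Group G] {p : ℕ}

theorem ker_toPermHom_le_normalizer (P : Sylow p G) :
    (MulAction.toPermHom G (Sylow p G)).ker ≤ normalizer (P : Set G) := fun _ hg =>
  smul_eq_iff_mem_normalizer.mp (congrArg (fun σ : Equiv.Perm (Sylow p G) => σ P) hg)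

variable [Finite G] [Fact p.Prime]

theorem normalizer_eq_self_of_card_eq_index (P : Sylow p G)
    (h : Nat.card (Sylow p G) = (P : Subgroup G).index) : normalizer (P : Set G) = P := by
  refine (eq_of_le_of_card_ge le_normalizer ?_).symm
  have hP := (P : Subgroup G).card_mul_index
  have hN := (normalizer (P : Set G)).card_mul_index
  rw [← card_eq_index_normalizer, h] at hN
  exact (Nat.eq_of_mul_eq_mul_right (Nat.pos_of_ne_zero (index_ne_zero_of_finite))
    (hN.trans hP.symm)).le

/-- The kernel is a normal subgroup of `P`, which has prime order and is not normal. -/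
theorem injective_toPermHom_of_card_eq_prime (P : Sylow p G) (hP : Nat.card P = p)
    (hself : normalizer (P : Set G) = P) (hnormal : ¬ (P : Subgroup G).Normal) :
    Function.Injective (MulAction.toPermHom G (Sylow p G)) := by
  set K := (MulAction.toPermHom G (Sylow p G)).ker
  have hle : K ≤ P := hself ▸ P.ker_toPermHom_le_normalizer
  rw [← MonoidHom.ker_eq_bot_iff, ← card_eq_one]
  have hdvd : Nat.card K ∣ p := (card_dvd_of_le hle).trans (dvd_of_eq hP)
  refine ((Fact.out : p.Prime).eq_one_or_self_of_dvd _ hdvd).resolve_right fun hK => ?_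
  have : K = P := eq_of_le_of_card_ge hle (by rw [hP, hK])
  exact hnormal (this ▸ MonoidHom.normal_ker _)

end Sylow

theorem Equiv.Perm.nonempty_mulEquiv_alternatingGroup_of_injective {α G : Type*} [Fintype α]
    [DecidableEq α] [Group G] {f : G →* Equiv.Perm α} (hf : Function.Injective f)
    (hcard : 2 * Nat.card G = Nat.card (Equiv.Perm α)) :
    Nonempty (G ≃* alternatingGroup α) := by
  have : Finite G := Finite.of_injective f hf
  let e : G ≃* f.range := MonoidHom.ofInjective hf
  have hindex : f.range.index = 2 := by
    have := f.range.card_mul_index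
    rw [← Nat.card_congr e.toEquiv, ← hcard, mul_comm] at this
    exact Nat.eq_of_mul_eq_mul_right Nat.card_pos this
  exact ⟨e.trans (MulEquiv.subgroupCongr (eq_alternatingGroup_of_index_eq_two hindex))⟩

/-- If `G` has order `p² * q` with `p < q` primes and the converse of Lagrange's theorem
fails for `G`, then `G ≅ A₄`. -/
theorem stmt_11 (G : Type*) [Group G] [Finite G] (p q : ℕ) (hp : p.Prime) (hq : q.Prime)
    (hpq : p < q) (hcard : Nat.card G = p ^ 2 * q)
    (hfail : ∃ d : ℕ, d ∣ Nat.card G ∧ ∀ H : Subgroup G, Nat.card H ≠ d) :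
    Nonempty (G ≃* alternatingGroup (Fin 4)) := by
  have : Fact q.Prime := ⟨hq⟩
  obtain ⟨d, hd, hno⟩ := hfail
  obtain rfl : d = p * q := by
    by_contra hne
    obtain ⟨H, hH⟩ := exists_subgroup_card_eq_of_dvd_of_ne hp hq hcard hd hne
    exact hno H hH
  have hqp : ¬ q ∣ p ^ 2 := fun h =>
    hpq.ne' ((Nat.prime_dvd_prime_iff_eq hq hp).mp (hq.dvd_of_dvd_pow h))
  obtain ⟨Q, hQ, hQindex⟩ :=
    Sylow.exists_card_eq_prime_of_card_eq (hcard.trans (mul_comm _ _)) hqp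
  have hQnormal : ¬ (Q : Subgroup G).Normal :=
    not_normal_of_forall_card_ne hp ((Nat.coprime_primes hp hq).mpr hpq.ne)
      (hcard ▸ (dvd_pow_self p two_ne_zero).mul_right q) hQ hno
  have hn1 : Nat.card (Sylow q G) ≠ 1 := fun h =>
    have := (Nat.card_eq_one_iff_unique.mp h).1
    hQnormal Q.normal_of_subsingleton
  obtain ⟨rfl, rfl, hn⟩ := Nat.Prime.eq_two_three_four_of_dvd_sq_of_modEq_one hp hq hpq
    (hQindex ▸ Q.card_dvd_index) (card_sylow_modEq_one q G) hn1
  have hinj := Q.injective_toPermHom_of_card_eq_prime hQ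
    (Q.normalizer_eq_self_of_card_eq_index (hn.trans hQindex.symm)) hQnormal
  let e : Sylow 3 G ≃ Fin 4 := (Finite.equivFin _).trans (finCongr hn)
  exact Equiv.Perm.nonempty_mulEquiv_alternatingGroup_of_injective
    (f := e.permCongrHom.toMonoidHom.comp (MulAction.toPermHom G (Sylow 3 G)))
    (e.permCongrHom.injective.comp hinj) (by rw [hcard, Nat.card_perm, Nat.card_fin]; rfl)
end

section
/- In G = C_{p^n} × C_{p^m} with n ≥ m ≥ 1, the number of cyclic subgroups of order p^r is p^{r-1}(p+1) if 1 ≤ r ≤ m, and p^m if m < r ≤ n. -/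
/-!
An element of order `d` generates a cyclic subgroup of order `d`, and each such subgroup has
exactly `φ d` generators; so the cyclic subgroups of order `p ^ (s + 1)` number
`#{x | ord x = p ^ (s + 1)} / φ (p ^ (s + 1))`. The elements of order `p ^ (s + 1)` are those
killed by `p ^ (s + 1)` but not by `p ^ s`, and in `C_{p^n} × C_{p^m}` the elements killed by
`p ^ k` number `p ^ min n k * p ^ min m k`.
-/

open Subgroup

theorem Nat.gcd_pow_pow (p a b : ℕ) : Nat.gcd (p ^ a) (p ^ b) = p ^ min a b := by
  rcases le_total a b with h | h
  · rw [min_eq_left h, Nat.gcd_eq_left (pow_dvd_pow p h)]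
  · rw [min_eq_right h, Nat.gcd_eq_right (pow_dvd_pow p h)]

section CyclicSubgroups

variable {G : Type*} [Group G]

theorem card_generators_eq_totient (H : Subgroup G) [IsCyclic H] [Finite H] :
    Nat.card {x : G // zpowers x = H} = (Nat.card H).totient := by
  classical
  have : Fintype H := Fintype.ofFinite H
  let e : {x : G // zpowers x = H} ≃ {y : H // orderOf y = Nat.card H} :=
    { toFun := fun x => ⟨⟨x, x.2.le (mem_zpowers _)⟩, by
        rw [orderOf_mk, ← Nat.card_zpowers, x.2]⟩
      invFun := fun y => ⟨y, eq_of_le_of_card_ge (zpowers_le.mpr y.1.2) <| by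
        rw [Nat.card_zpowers, orderOf_coe, y.2]⟩
      left_inv := fun _ => rfl
      right_inv := fun _ => rfl }
  rw [Nat.card_congr e, Nat.card_eq_fintype_card, Fintype.card_subtype,
    IsCyclic.card_orderOf_eq_totient (by rw [Nat.card_eq_fintype_card])]

theorem card_orderOf_eq_totient_mul_card_cyclic [Finite G] (d : ℕ) :
    Nat.card {x : G // orderOf x = d} =
      d.totient * Nat.card {H : Subgroup G // IsCyclic H ∧ Nat.card H = d} := by
  have : Fintype {H : Subgroup G // IsCyclic H ∧ Nat.card H = d} := Fintype.ofFinite _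
  let f : {x : G // orderOf x = d} → {H : Subgroup G // IsCyclic H ∧ Nat.card H = d} :=
    fun x => ⟨zpowers x, isCyclic_zpowers x.1, by rw [Nat.card_zpowers, x.2]⟩
  have hfiber : ∀ H, Nat.card {x // f x = H} = d.totient := by
    rintro ⟨H, hcyc, hcard⟩
    calc Nat.card {x // f x = ⟨H, hcyc, hcard⟩}
        = Nat.card {x : G // zpowers x = H} := Nat.card_congr
          { toFun := fun x => ⟨x.1, congrArg Subtype.val x.2⟩
            invFun := fun x => ⟨⟨x, by rw [← Nat.card_zpowers, x.2, hcard]⟩, Subtype.ext x.2⟩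
            left_inv := fun _ => rfl
            right_inv := fun _ => rfl }
      _ = d.totient := by rw [card_generators_eq_totient, hcard]
  rw [← Nat.card_congr (Equiv.sigmaFiberEquiv f), Nat.card_sigma]
  simp [hfiber, mul_comm]

theorem card_orderOf_eq_prime_pow_succ [Finite G] {p : ℕ} (hp : p.Prime) (s : ℕ) :
    Nat.card {x : G // orderOf x = p ^ (s + 1)} =
      Nat.card {x : G // x ^ p ^ (s + 1) = 1} - Nat.card {x : G // x ^ p ^ s = 1} := by
  have : Fact p.Prime := ⟨hp⟩
  have hsub : {x : G | x ^ p ^ s = 1} ⊆ {x | x ^ p ^ (s + 1) = 1} := fun x hx => by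
    simp only [Set.mem_ofPred_eq, pow_succ, pow_mul] at hx ⊢
    rw [hx, one_pow]
  have hdiff : {x : G | orderOf x = p ^ (s + 1)} =
      {x | x ^ p ^ (s + 1) = 1} \ {x | x ^ p ^ s = 1} := by
    ext x
    refine ⟨fun h => ⟨h ▸ pow_orderOf_eq_one x, fun hs => ?_⟩,
      fun h => orderOf_eq_prime_pow h.2 h.1⟩
    have := (Nat.pow_dvd_pow_iff_le_right hp.one_lt).mp (h ▸ orderOf_dvd_of_pow_eq_one hs)
    omega
  have h := Set.ncard_sdiff hsub
  rw [← hdiff] at h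
  exact h

end CyclicSubgroups

theorem card_pow_eq_one_prod {G H : Type*} [Group G] [Group H] (d : ℕ) :
    Nat.card {x : G × H // x ^ d = 1} =
      Nat.card {x : G // x ^ d = 1} * Nat.card {y : H // y ^ d = 1} := by
  rw [← Nat.card_prod]
  exact Nat.card_congr ((Equiv.subtypeEquivRight
    (q := fun x : G × H => x.1 ^ d = 1 ∧ x.2 ^ d = 1) fun x => Prod.ext_iff).trans
    (Equiv.subtypeProdEquivProd (p := fun x : G => x ^ d = 1) (q := fun y : H => y ^ d = 1)))

theorem IsCyclic.card_pow_eq_one {G : Type*} [CommGroup G] [IsCyclic G] [Finite G] (d : ℕ) :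
    Nat.card {x : G // x ^ d = 1} = (Nat.card G).gcd d :=
  IsCyclic.card_powMonoidHom_ker G d

theorem card_pow_prime_pow_eq_one_zmod (p N k : ℕ) [NeZero (p ^ N)] :
    Nat.card {x : Multiplicative (ZMod (p ^ N)) // x ^ p ^ k = 1} = p ^ min N k := by
  rw [IsCyclic.card_pow_eq_one, Nat.card_congr Multiplicative.toAdd, Nat.card_zmod,
    Nat.gcd_pow_pow]

theorem totient_mul_card_cyclic_zmod_prod {p : ℕ} (hp : p.Prime) (n m s : ℕ) :
    p ^ s * (p - 1) *
      Nat.card {H : Subgroup (Multiplicative (ZMod (p ^ n)) × Multiplicative (ZMod (p ^ m))) //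
        IsCyclic H ∧ Nat.card H = p ^ (s + 1)} =
      p ^ min n (s + 1) * p ^ min m (s + 1) - p ^ min n s * p ^ min m s := by
  have : NeZero (p ^ n) := ⟨pow_ne_zero _ hp.ne_zero⟩
  have : NeZero (p ^ m) := ⟨pow_ne_zero _ hp.ne_zero⟩
  rw [← Nat.totient_prime_pow_succ hp, ← card_orderOf_eq_totient_mul_card_cyclic,
    card_orderOf_eq_prime_pow_succ hp, card_pow_eq_one_prod, card_pow_eq_one_prod,
    card_pow_prime_pow_eq_one_zmod, card_pow_prime_pow_eq_one_zmod,
    card_pow_prime_pow_eq_one_zmod, card_pow_prime_pow_eq_one_zmod]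

theorem stmt_13_general (p n m : ℕ) (hp : p.Prime) (hmn : m ≤ n) (r : ℕ) :
    (1 ≤ r → r ≤ m →
      Nat.card {H : Subgroup (Multiplicative (ZMod (p ^ n)) × Multiplicative (ZMod (p ^ m))) //
        IsCyclic H ∧ Nat.card H = p ^ r} = p ^ (r - 1) * (p + 1)) ∧
    (m < r → r ≤ n →
      Nat.card {H : Subgroup (Multiplicative (ZMod (p ^ n)) × Multiplicative (ZMod (p ^ m))) //
        IsCyclic H ∧ Nat.card H = p ^ r} = p ^ m) := by
  have htot_pos (s : ℕ) : 0 < p ^ s * (p - 1) :=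
    Nat.mul_pos (pow_pos hp.pos s) (Nat.sub_pos_of_lt hp.one_lt)
  have hp1 : 1 ≤ p := hp.one_lt.le
  refine ⟨fun hr hrm => ?_, fun hmr hrn => ?_⟩
  · obtain ⟨s, rfl⟩ : ∃ s, r = s + 1 := ⟨r - 1, by omega⟩
    refine Nat.eq_of_mul_eq_mul_left (htot_pos s) ?_
    rw [totient_mul_card_cyclic_zmod_prod hp, min_eq_right (by omega), min_eq_right hrm,
      min_eq_right (by omega), min_eq_right (by omega), Nat.add_sub_cancel]
    have : p ^ s * p ^ s ≤ p ^ (s + 1) * p ^ (s + 1) := by gcongr <;> omega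
    zify [this, hp1]
    ring
  · obtain ⟨s, rfl⟩ : ∃ s, r = s + 1 := ⟨r - 1, by omega⟩
    refine Nat.eq_of_mul_eq_mul_left (htot_pos s) ?_
    rw [totient_mul_card_cyclic_zmod_prod hp, min_eq_right hrn, min_eq_left hmr.le,
      min_eq_right (by omega), min_eq_left (by omega)]
    have : p ^ s * p ^ m ≤ p ^ (s + 1) * p ^ m := by gcongr; omega
    zify [this, hp1]
    ring

/-- In `G = C_{p^n} × C_{p^m}` with `n ≥ m ≥ 1`, the number of cyclic subgroups of order
`p^r` is `p^(r-1) * (p+1)` for `1 ≤ r ≤ m`, and `p^m` for `m < r ≤ n`. -/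
theorem stmt_13 (p n m : ℕ) (hp : p.Prime) (hm : 1 ≤ m) (hmn : m ≤ n) (r : ℕ) :
    (1 ≤ r → r ≤ m →
      Nat.card {H : Subgroup (Multiplicative (ZMod (p ^ n)) × Multiplicative (ZMod (p ^ m))) //
        IsCyclic H ∧ Nat.card H = p ^ r} = p ^ (r - 1) * (p + 1)) ∧
    (m < r → r ≤ n →
      Nat.card {H : Subgroup (Multiplicative (ZMod (p ^ n)) × Multiplicative (ZMod (p ^ m))) //
        IsCyclic H ∧ Nat.card H = p ^ r} = p ^ m) :=
  stmt_13_general p n m hp hmn r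
end
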